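/- Let G be an abelian group, H a finitely generated subgroup of G, and f : G → ℂ a local polynomial. Then the variety τ(f|_H) of the restriction of f to H is finite dimensional; it equals the linear span of all translates of f|_H. -/

import Mathlib

/-- The difference operator: `(Δ_y f)(x) = f(x+y) - f(x)`. -/
def diffOp {G : Type*} [AddCommGroup G] (y : G) (f : G → ℂ) : G → ℂ :=
  fun x => f (x + y) - f x

/-- `f` is a generalized polynomial: some iterated difference of order `n+1` always vanishes. -/
def IsGenPoly {G : Type*} [AddCommGroup G] (f : G → ℂ) : Prop :=
  ∃ n : ℕ, ∀ ys : List G, ys.length = n + 1 → ys.foldr diffOp f = 0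

/-- An additive function is a homomorphism of `G` into `(ℂ, +)`. -/
def IsAdditiveFn {G : Type*} [AddCommGroup G] (a : G → ℂ) : Prop :=
  ∀ x y : G, a (x + y) = a x + a y

/-- `f` is a polynomial: it belongs to the complex function algebra generated by the
additive functions (constants lie in every subalgebra). -/
def IsPolyFn {G : Type*} [AddCommGroup G] (f : G → ℂ) : Prop :=
  f ∈ Algebra.adjoin ℂ {a : G → ℂ | IsAdditiveFn a}

/-- The variety `τ(f)`: smallest translation-invariant linear subspace of `ℂ^G`
containing `f` which is closed under pointwise convergence. -/
noncomputable def variety {G : Type*} [AddCommGroup G] (f : G → ℂ) :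
    Submodule ℂ (G → ℂ) :=
  (Submodule.span ℂ {g : G → ℂ | ∃ y : G, g = fun x => f (x + y)}).topologicalClosure

/-- `f` is a local polynomial: its restriction to every finitely generated subgroup
is a polynomial. -/
def IsLocalPolyFn {G : Type*} [AddCommGroup G] (f : G → ℂ) : Prop :=
  ∀ H : AddSubgroup G, H.FG → IsPolyFn (fun x : H => f x)

/-!
The functions whose translates span a finite-dimensional space form a subalgebra: the translates
of `p + q`, resp. `p * q`, lie in the sum, resp. product, of the spans of translates of `p` and
`q`. It contains every additive function `a`, whose translates `a + a y` lie in the span of `a`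
and `1`, hence every polynomial. A finite-dimensional subspace of `ℂ^H` is closed for pointwise
convergence, so for the polynomial `f|_H` the span of translates is already `τ(f|_H)`.
-/

section TranslateSpan

variable {G K : Type*} [Field K]

def translateSpan [Add G] (f : G → K) : Submodule K (G → K) :=
  Submodule.span K {g : G → K | ∃ y : G, g = fun x => f (x + y)}

lemma translate_mem_translateSpan [Add G] (f : G → K) (y : G) :
    (fun x => f (x + y)) ∈ translateSpan f :=
  Submodule.subset_span ⟨y, rfl⟩

lemma translateSpan_le_iff [Add G] {f : G → K} {V : Submodule K (G → K)} :
    translateSpan f ≤ V ↔ ∀ y : G, (fun x => f (x + y)) ∈ V := by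
  simp only [translateSpan, Submodule.span_le, Set.ofPred_subset, forall_exists_index,
    forall_eq_apply_imp_iff, SetLike.mem_coe]

lemma translateSpan_algebraMap_le [Add G] (r : K) :
    translateSpan (algebraMap K (G → K) r) ≤ K ∙ algebraMap K (G → K) r :=
  translateSpan_le_iff.2 fun _ => Submodule.mem_span_singleton_self _

lemma translateSpan_add_le [Add G] (p q : G → K) :
    translateSpan (p + q) ≤ translateSpan p ⊔ translateSpan q :=
  translateSpan_le_iff.2 fun y => Submodule.add_mem_sup
    (translate_mem_translateSpan p y) (translate_mem_translateSpan q y)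

lemma translateSpan_mul_le [Add G] (p q : G → K) :
    translateSpan (p * q) ≤ translateSpan p * translateSpan q :=
  translateSpan_le_iff.2 fun y => Submodule.mul_mem_mul
    (translate_mem_translateSpan p y) (translate_mem_translateSpan q y)

lemma IsAdditiveFn.translateSpan_le [AddCommGroup G] {a : G → ℂ} (ha : IsAdditiveFn a) :
    translateSpan a ≤ Submodule.span ℂ {a, 1} := by
  refine translateSpan_le_iff.2 fun y => ?_
  have hshift : (fun x => a (x + y)) = a + a y • 1 := by
    funext x
    simp [ha x y]
  rw [hshift]
  exact add_mem (Submodule.subset_span (by simp))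
    (Submodule.smul_mem _ _ (Submodule.subset_span (by simp)))

variable (G K) in
def translationFinite [Add G] : Subalgebra K (G → K) where
  carrier := {f | FiniteDimensional K (translateSpan f)}
  algebraMap_mem' r :=
    Submodule.finiteDimensional_of_le (translateSpan_algebraMap_le r)
  add_mem' {p q} (_ : FiniteDimensional K _) (_ : FiniteDimensional K _) :=
    Submodule.finiteDimensional_of_le (translateSpan_add_le p q)
  mul_mem' {p q} (hp : FiniteDimensional K _) (hq : FiniteDimensional K _) :=
    have : FiniteDimensional K (translateSpan p * translateSpan q) :=
      Module.Finite.iff_fg.2 (Submodule.FG.mul (Module.Finite.iff_fg.1 hp)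
        (Module.Finite.iff_fg.1 hq))
    Submodule.finiteDimensional_of_le (translateSpan_mul_le p q)

lemma IsPolyFn.finiteDimensional_translateSpan [AddCommGroup G] {f : G → ℂ}
    (hf : IsPolyFn f) : FiniteDimensional ℂ (translateSpan f) := by
  suffices Algebra.adjoin ℂ {a : G → ℂ | IsAdditiveFn a} ≤ translationFinite G ℂ from this hf
  refine Algebra.adjoin_le fun a (ha : IsAdditiveFn a) => ?_
  have : FiniteDimensional ℂ (Submodule.span ℂ ({a, 1} : Set (G → ℂ))) :=
    FiniteDimensional.span_of_finite ℂ (Set.toFinite _)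
  exact Submodule.finiteDimensional_of_le ha.translateSpan_le

end TranslateSpan

lemma variety_eq_translateSpan_of_finiteDimensional {G : Type*} [AddCommGroup G] {f : G → ℂ}
    [FiniteDimensional ℂ (translateSpan f)] : variety f = translateSpan f :=
  (Submodule.closed_of_finiteDimensional (translateSpan f)).submodule_topologicalClosure_eq

/-- For a local polynomial `f` and a finitely generated subgroup `H`, the variety
`τ(f|_H)` is finite dimensional and equals the linear span of the translates of
`f|_H`. -/
theorem variety_restriction_finiteDimensional_eq_span_translates
    {G : Type*} [AddCommGroup G] (f : G → ℂ) (hloc : IsLocalPolyFn f)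
    (H : AddSubgroup G) (hH : H.FG) :
    FiniteDimensional ℂ ↥(variety (fun x : H => f x)) ∧
      variety (fun x : H => f x) =
        Submodule.span ℂ {g : H → ℂ | ∃ y : H, g = fun x : H => f ↑(x + y)} := by
  have := (hloc H hH).finiteDimensional_translateSpan
  rw [variety_eq_translateSpan_of_finiteDimensional]
  exact ⟨this, rfl⟩
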